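/- For all integers m, n ≥ 3, P(S, m×n) = ⋃_{i,j∈{1,2}} P_{i,j}(S, m×n), and the four sets P_{i,j}(S, m×n) for i,j∈{1,2} are non-empty and pairwise disjoint. -/

import Mathlib

/-- The 16-letter alphabet 𝒜 = {A,…,P}. -/
inductive A16 : Type
  | A | B | C | D | E | F | G | H | I | J | K | L | M | N | O | P
  deriving DecidableEq

/-- The 2×2 block substitution μ on 𝒜 (rows top to bottom). -/
def mu : A16 → Fin 2 → Fin 2 → A16
  | .A => ![![.A, .F], ![.G, .C]]
  | .B => ![![.A, .F], ![.H, .D]]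
  | .C => ![![.B, .E], ![.G, .C]]
  | .D => ![![.B, .E], ![.H, .D]]
  | .E => ![![.A, .N], ![.G, .K]]
  | .F => ![![.A, .N], ![.H, .L]]
  | .G => ![![.B, .M], ![.G, .K]]
  | .H => ![![.B, .M], ![.H, .L]]
  | .I => ![![.I, .F], ![.O, .C]]
  | .J => ![![.I, .F], ![.P, .D]]
  | .K => ![![.J, .E], ![.O, .C]]
  | .L => ![![.J, .E], ![.P, .D]]
  | .M => ![![.I, .N], ![.O, .K]]
  | .N => ![![.I, .N], ![.P, .L]]
  | .O => ![![.J, .M], ![.O, .K]]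
  | .P => ![![.J, .M], ![.P, .L]]

/-- Entry version of μ, indexed by arbitrary naturals (via mod 2). -/
def muE (x : A16) (r c : ℕ) : A16 :=
  mu x ⟨r % 2, by omega⟩ ⟨c % 2, by omega⟩

/-- `superE n x` is the supertile μⁿ(x), a 2ⁿ×2ⁿ array over 𝒜,
given as a total function on ℕ × ℕ (only indices < 2ⁿ are relevant). -/
def superE : ℕ → A16 → ℕ → ℕ → A16
  | 0, x, _, _ => x
  | n + 1, x, r, c => muE (superE n x (r / 2) (c / 2)) r c

/-- The supertile T_k = μᵏ(N). -/
def Tfun (k : ℕ) : ℕ → ℕ → A16 := superE k .N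

/-- An m×n pattern over the alphabet α. -/
abbrev Pat (α : Type) (m n : ℕ) := Fin m → Fin n → α

/-- The set of m×n patterns occurring in the size×size array X. -/
def patIn {α : Type} (X : ℕ → ℕ → α) (size m n : ℕ) : Set (Pat α m n) :=
  { p | ∃ r c : ℕ, r + m ≤ size ∧ c + n ≤ size ∧
      ∀ (i : Fin m) (j : Fin n), p i j = X (r + i) (c + j) }

/-- P(T, m×n) = ⋃ₖ P(T_k, m×n). -/
def PT (m n : ℕ) : Set (Pat A16 m n) := ⋃ k : ℕ, patIn (Tfun k) (2 ^ k) m n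

/-- μ applied to an m×n pattern, as a total 2m×2n array on ℕ × ℕ
(indices are reduced mod the valid range; in range this is exactly μ(p)). -/
def muPatE {m n : ℕ} (p : Pat A16 m n) (r c : ℕ) : A16 :=
  if hm : 0 < m then
    if hn : 0 < n then
      muE (p ⟨r / 2 % m, Nat.mod_lt _ hm⟩ ⟨c / 2 % n, Nat.mod_lt _ hn⟩) r c
    else .A
  else .A

/-- μ² applied to an m×n pattern, as a total 4m×4n array on ℕ × ℕ. -/
def mu2PatE {m n : ℕ} (p : Pat A16 m n) (r c : ℕ) : A16 :=
  muE (muPatE p (r / 2) (c / 2)) r c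

/-- P_{i,j}(T, m×n) = { μ(x)[i,j,m×n] : x ∈ P(T,m×n) } (1-based corner (i,j)). -/
def Pij (i j m n : ℕ) : Set (Pat A16 m n) :=
  { q | ∃ x ∈ PT m n, ∀ (a : Fin m) (b : Fin n),
      q a b = muPatE x (i - 1 + a) (j - 1 + b) }

/-- Q_{i,j}(T, m×n) = { μ²(x)[i,j,m×n] : x ∈ P(T,m×n) } (1-based corner (i,j)). -/
def Qij (i j m n : ℕ) : Set (Pat A16 m n) :=
  { q | ∃ x ∈ PT m n, ∀ (a : Fin m) (b : Fin n),
      q a b = mu2PatE x (i - 1 + a) (j - 1 + b) }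

/-- The 2×2 block substitution φ from 𝒜 to ℬ = {0,1,2,3}. -/
def phi : A16 → Fin 2 → Fin 2 → Fin 4
  | .A => ![![0, 1], ![0, 0]]
  | .B => ![![0, 1], ![1, 1]]
  | .C => ![![1, 0], ![0, 0]]
  | .D => ![![1, 0], ![1, 1]]
  | .E => ![![0, 3], ![0, 2]]
  | .F => ![![0, 3], ![1, 3]]
  | .G => ![![1, 2], ![0, 2]]
  | .H => ![![1, 2], ![1, 3]]
  | .I => ![![2, 1], ![2, 0]]
  | .J => ![![2, 1], ![3, 1]]
  | .K => ![![3, 0], ![2, 0]]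
  | .L => ![![3, 0], ![3, 1]]
  | .M => ![![2, 3], ![2, 2]]
  | .N => ![![2, 3], ![3, 3]]
  | .O => ![![3, 2], ![2, 2]]
  | .P => ![![3, 2], ![3, 3]]

/-- Entry version of φ, indexed by arbitrary naturals (via mod 2). -/
def phiE (x : A16) (r c : ℕ) : Fin 4 :=
  phi x ⟨r % 2, by omega⟩ ⟨c % 2, by omega⟩

/-- φ applied to an m×n pattern over 𝒜, as a total 2m×2n array on ℕ × ℕ. -/
def phiPatE {m n : ℕ} (p : Pat A16 m n) (r c : ℕ) : Fin 4 :=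
  if hm : 0 < m then
    if hn : 0 < n then
      phiE (p ⟨r / 2 % m, Nat.mod_lt _ hm⟩ ⟨c / 2 % n, Nat.mod_lt _ hn⟩) r c
    else 0
  else 0

/-- φ(T_k), a 2^(k+1)×2^(k+1) array over ℬ. -/
def Sfun (k : ℕ) (r c : ℕ) : Fin 4 := phiE (Tfun k (r / 2) (c / 2)) r c

/-- P(S, m×n) = ⋃_{k≥1} P(φ(T_{k-1}), m×n). -/
def PS (m n : ℕ) : Set (Pat (Fin 4) m n) :=
  ⋃ k : ℕ, patIn (Sfun k) (2 ^ (k + 1)) m n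

/-- P_{i,j}(S, m×n) = { φ(x)[i,j,m×n] : x ∈ P(T,m×n) } (1-based corner (i,j)). -/
def PSij (i j m n : ℕ) : Set (Pat (Fin 4) m n) :=
  { q | ∃ x ∈ PT m n, ∀ (a : Fin m) (b : Fin n),
      q a b = phiPatE x (i - 1 + a) (j - 1 + b) }

/-- A_n = |P(S, n×n)|. -/
noncomputable def Acnt (n : ℕ) : ℕ := Nat.card (PS n n)

/-- a_{i,j}(n) = |P_{i,j}(T, n×n)|. -/
noncomputable def aT (i j n : ℕ) : ℕ := Nat.card (Pij i j n n)

/-- b_{i,j}(n) = |P_{i,j}(T, n×(n+1))|. -/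
noncomputable def bT (i j n : ℕ) : ℕ := Nat.card (Pij i j n (n + 1))

/-- c_{i,j}(n) = |P_{i,j}(T, (n+1)×n)|. -/
noncomputable def cT (i j n : ℕ) : ℕ := Nat.card (Pij i j (n + 1) n)

/-!
A pattern of `φ(T_k)` with corner `(r, c)` is `φ(x)[r % 2 + 1, c % 2 + 1]` for the pattern `x` of
`T_k` with corner `(r / 2, c / 2)`; that `x` may stick out of `T_k`, but `T_k` recurs inside
`T_(k+3)` with room to spare. For disjointness, the top left 3×3 window of `φ(x)[i, j]` only
depends on `(i, j)` and on the top left 2×2 block of `x`. Every 2×2 block of every `T_k` is one of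
the 76 blocks of `T_5`, since that set is closed under taking 2×2 blocks of `μ`-images, and a
direct check shows that these blocks produce different 3×3 windows for different corners.
-/

section BlockSubstitution

variable {α β : Type*}

/-- The image of an array under the 2×2 block substitution `σ`. -/
def substArr (σ : α → Fin 2 → Fin 2 → β) (X : ℕ → ℕ → α) (r c : ℕ) : β :=
  σ (X (r / 2) (c / 2)) ⟨r % 2, Nat.mod_lt _ two_pos⟩ ⟨c % 2, Nat.mod_lt _ two_pos⟩

def shiftArr (X : ℕ → ℕ → α) (r c : ℕ) (a b : ℕ) : α := X (r + a) (c + b)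

lemma substArr_congr {σ : α → Fin 2 → Fin 2 → β} {X Y : ℕ → ℕ → α} {r c : ℕ}
    (h : X (r / 2) (c / 2) = Y (r / 2) (c / 2)) : substArr σ X r c = substArr σ Y r c := by
  rw [substArr, substArr, h]

lemma substArr_two_mul_add (σ : α → Fin 2 → Fin 2 → β) (X : ℕ → ℕ → α) (r c a b : ℕ) :
    substArr σ X (2 * r + a) (2 * c + b) = substArr σ (shiftArr X r c) a b := by
  simp only [substArr, shiftArr, Nat.mul_add_div two_pos, Nat.mul_add_mod]

end BlockSubstitution

lemma superE_succ (k : ℕ) (x : A16) : superE (k + 1) x = substArr mu (superE k x) := rfl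

lemma Tfun_succ (k : ℕ) : Tfun (k + 1) = substArr mu (Tfun k) := rfl

lemma Sfun_eq (k : ℕ) : Sfun k = substArr phi (Tfun k) := rfl

lemma superE_add (k l : ℕ) (x : A16) {r c : ℕ} (a b : ℕ) (hr : r < 2 ^ k) (hc : c < 2 ^ k) :
    superE (k + l) x (2 ^ k * a + r) (2 ^ k * b + c) = superE k (superE l x a b) r c := by
  induction k generalizing r c with
  | zero => simp_all [superE]
  | succ k ih =>
    have split (a r : ℕ) : 2 ^ (k + 1) * a + r = 2 * (2 ^ k * a) + r := by ring
    rw [pow_succ] at hr hc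
    rw [Nat.add_right_comm, superE_succ, superE_succ, split a r, split b c, substArr_two_mul_add]
    exact substArr_congr (ih (by omega) (by omega))

-- `μ³(N)` has an `N` at position `(4, 3)`.
lemma Tfun_add_three {k r c : ℕ} (hr : r < 2 ^ k) (hc : c < 2 ^ k) :
    Tfun (k + 3) (2 ^ k * 4 + r) (2 ^ k * 3 + c) = Tfun k r c :=
  superE_add k 3 .N 4 3 hr hc

lemma phiPatE_eq_substArr {m n R C r c : ℕ} {x : Pat A16 m n} {X : ℕ → ℕ → A16}
    (hx : ∀ a b, x a b = X (R + a) (C + b)) (hr : r < 2 * m) (hc : c < 2 * n) :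
    phiPatE x r c = substArr phi X (2 * R + r) (2 * C + c) := by
  rw [substArr_two_mul_add, phiPatE, dif_pos (by omega), dif_pos (by omega), hx]
  simp only [Nat.mod_eq_of_lt (show r / 2 < m by omega), Nat.mod_eq_of_lt (show c / 2 < n by omega)]
  rfl

lemma PSij_subset_PS {i j m n : ℕ} (hi : i ≤ 2) (hj : j ≤ 2) (hm : 0 < m) (hn : 0 < n) :
    PSij i j m n ⊆ PS m n := by
  rintro q ⟨x, hx, hq⟩
  obtain ⟨k, R, C, hR, hC, hxT⟩ := Set.mem_iUnion.1 hx
  refine Set.mem_iUnion.2 ⟨k, 2 * R + (i - 1), 2 * C + (j - 1), ?_, ?_, fun a b => ?_⟩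
  · rw [pow_succ]; omega
  · rw [pow_succ]; omega
  · rw [hq, phiPatE_eq_substArr hxT (by omega) (by omega), Sfun_eq, add_assoc, add_assoc]

lemma PS_subset_iUnion_PSij (m n : ℕ) :
    PS m n ⊆ ⋃ i ∈ ({1, 2} : Set ℕ), ⋃ j ∈ ({1, 2} : Set ℕ), PSij i j m n := by
  intro q hq
  obtain ⟨k, r, c, hr, hc, hqS⟩ := Set.mem_iUnion.1 hq
  rw [pow_succ] at hr hc
  have parity_mem (u : ℕ) : u % 2 + 1 ∈ ({1, 2} : Set ℕ) := by
    rcases Nat.mod_two_eq_zero_or_one u with h | h <;> simp [h]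
  let x : Pat A16 m n := fun a b => Tfun (k + 3) (2 ^ k * 4 + r / 2 + a) (2 ^ k * 3 + c / 2 + b)
  have hx : x ∈ PT m n := Set.mem_iUnion.2
    ⟨k + 3, _, _, by rw [pow_add]; omega, by rw [pow_add]; omega, fun _ _ => rfl⟩
  refine Set.mem_biUnion (parity_mem r) (Set.mem_biUnion (parity_mem c) ⟨x, hx, fun a b => ?_⟩)
  rw [hqS, Sfun_eq, Nat.add_sub_cancel, Nat.add_sub_cancel,
    phiPatE_eq_substArr (fun _ _ => rfl) (by omega) (by omega),
    show 2 * (2 ^ k * 4 + r / 2) + (r % 2 + a) = 2 * (2 ^ k * 4) + (r + a) by omega,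
    show 2 * (2 ^ k * 3 + c / 2) + (c % 2 + b) = 2 * (2 ^ k * 3) + (c + b) by omega,
    substArr_two_mul_add]
  exact substArr_congr (Tfun_add_three (by omega) (by omega)).symm

lemma PT_nonempty (m n : ℕ) : (PT m n).Nonempty := by
  have hlt : m + n < 2 ^ (m + n) := Nat.lt_two_pow_self
  exact ⟨_, Set.mem_iUnion.2 ⟨m + n, 0, 0, by omega, by omega, fun a b => rfl⟩⟩

lemma PSij_nonempty (i j m n : ℕ) : (PSij i j m n).Nonempty :=
  let ⟨x, hx⟩ := PT_nonempty m n
  ⟨_, x, hx, fun _ _ => rfl⟩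

section Blocks

variable {α β : Type*}

abbrev Block (α : Type*) := α × α × α × α

def blockAt (X : ℕ → ℕ → α) (r c : ℕ) : Block α :=
  (X r c, X r (c + 1), X (r + 1) c, X (r + 1) (c + 1))

/-- A block as an array; only the cells with both indices `< 2` are meaningful. -/
def Block.toArr (y : Block α) : ℕ → ℕ → α
  | 0, 0 => y.1
  | 0, _ + 1 => y.2.1
  | _ + 1, 0 => y.2.2.1
  | _ + 1, _ + 1 => y.2.2.2

lemma Block.toArr_blockAt (X : ℕ → ℕ → α) (r c : ℕ) {a b : ℕ} (ha : a < 2) (hb : b < 2) :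
    (blockAt X r c).toArr a b = X (r + a) (c + b) := by
  interval_cases a <;> interval_cases b <;> rfl

lemma substArr_two_mul_add_eq_toArr (σ : α → Fin 2 → Fin 2 → β) (X : ℕ → ℕ → α) (r c : ℕ)
    {a b : ℕ} (ha : a < 4) (hb : b < 4) :
    substArr σ X (2 * r + a) (2 * c + b) = substArr σ (blockAt X r c).toArr a b := by
  rw [substArr_two_mul_add]
  exact substArr_congr (Block.toArr_blockAt X r c (by omega) (by omega)).symm

lemma blockAt_substArr (σ : α → Fin 2 → Fin 2 → β) (X : ℕ → ℕ → α) (r c : ℕ) {s t : ℕ}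
    (hs : s < 3) (ht : t < 3) :
    blockAt (substArr σ X) (2 * r + s) (2 * c + t) =
      blockAt (substArr σ (blockAt X r c).toArr) s t := by
  simp only [blockAt, add_assoc, Prod.mk.injEq]
  refine ⟨?_, ?_, ?_, ?_⟩ <;> exact substArr_two_mul_add_eq_toArr σ X r c (by omega) (by omega)

end Blocks

open A16 in
/-- The 76 distinct 2×2 blocks of `T_5`. -/
def legalBlocks : List (Block A16) :=
  [(A, F, G, C), (A, F, H, D), (A, N, G, K), (A, N, H, L), (B, E, G, C), (B, E, H, D), (B, M, G, K),
   (B, M, H, L), (C, G, N, I), (C, H, M, B), (C, H, N, A), (C, O, N, A), (C, P, M, J), (C, P, N, I),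
   (D, G, M, B), (D, G, N, A), (D, H, N, I), (D, O, M, J), (D, O, N, I), (D, P, N, A), (E, B, C, G),
   (E, B, C, H), (E, B, D, G), (E, B, D, H), (E, J, C, O), (E, J, C, P), (E, J, D, O), (E, J, D, P),
   (F, A, C, H), (F, A, D, G), (F, I, C, P), (F, I, D, O), (G, C, B, M), (G, C, I, N), (G, K, A, F),
   (G, K, B, E), (G, K, I, F), (H, D, B, M), (H, D, I, N), (H, L, A, F), (H, L, B, E), (H, L, I, F),
   (I, F, O, C), (I, F, P, D), (I, N, O, K), (I, N, P, L), (J, E, O, C), (J, E, P, D), (J, M, O, K),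
   (J, M, P, L), (K, G, F, I), (K, H, E, B), (K, O, F, A), (K, P, E, J), (L, G, E, B), (L, H, F, I),
   (L, O, E, J), (L, P, F, A), (M, B, K, G), (M, B, L, H), (M, J, K, O), (M, J, L, P), (N, A, K, H),
   (N, A, L, G), (N, I, K, P), (N, I, L, O), (O, C, A, N), (O, C, J, M), (O, K, A, F), (O, K, I, F),
   (O, K, J, E), (P, D, A, N), (P, D, J, M), (P, L, A, F), (P, L, I, F), (P, L, J, E)]

lemma blockAt_substArr_mu_mem_legalBlocks :
    ∀ y ∈ legalBlocks, ∀ s < 3, ∀ t < 3, blockAt (substArr mu y.toArr) s t ∈ legalBlocks := by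
  decide +kernel

lemma blockAt_Tfun_mem_legalBlocks {k r c : ℕ} (hr : r + 2 ≤ 2 ^ k) (hc : c + 2 ≤ 2 ^ k) :
    blockAt (Tfun k) r c ∈ legalBlocks := by
  induction k generalizing r c with
  | zero => simp at hr
  | succ k ih =>
    rcases Nat.eq_zero_or_pos k with rfl | hk
    · obtain ⟨rfl, rfl⟩ : r = 0 ∧ c = 0 := by simp at hr hc; omega
      decide +kernel
    have hP : 2 ≤ 2 ^ k := Nat.le_self_pow hk.ne' 2
    rw [pow_succ] at hr hc
    -- every 2×2 block of `μ(T_k)` lies inside `μ` of a 2×2 block of `T_k`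
    have split {u : ℕ} (hu : u + 2 ≤ 2 ^ k * 2) : ∃ u' s, s < 3 ∧ u = 2 * u' + s ∧ u' + 2 ≤ 2 ^ k :=
      ⟨min (u / 2) (2 ^ k - 2), u - 2 * min (u / 2) (2 ^ k - 2), by omega, by omega, by omega⟩
    obtain ⟨r', s, hs, rfl, hr'⟩ := split hr
    obtain ⟨c', t, ht, rfl, hc'⟩ := split hc
    rw [Tfun_succ, blockAt_substArr mu _ _ _ hs ht]
    exact blockAt_substArr_mu_mem_legalBlocks _ (ih hr' hc') s hs t ht

def Pat.corner3 {α : Type} {m n : ℕ} (q : Pat α m n) (hm : 3 ≤ m) (hn : 3 ≤ n) : Pat α 3 3 :=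
  fun a b => q (Fin.castLE hm a) (Fin.castLE hn b)

-- 3×3 patterns are compared through a numeral code: the kernel decides equality of numerals
-- much faster than equality of lists.
def windowCode (w : Pat (Fin 4) 3 3) : ℕ :=
  Nat.ofDigits 4 (List.ofFn fun a => List.ofFn fun b => (w a b : ℕ)).flatten

def cornerCodes (c : ℕ × ℕ) : List ℕ :=
  legalBlocks.map fun y => windowCode fun a b => substArr phi y.toArr (c.1 + a) (c.2 + b)

lemma cornerCodes_pairwise_disjoint :
    [(0, 0), (0, 1), (1, 0), (1, 1)].Pairwise
      fun c c' => ∀ w ∈ cornerCodes c, w ∉ cornerCodes c' := by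
  decide +kernel

lemma windowCode_corner3_mem_cornerCodes {i j m n : ℕ} {q : Pat (Fin 4) m n} (hm : 3 ≤ m)
    (hn : 3 ≤ n) (hi : i ≤ 2) (hj : j ≤ 2) (hq : q ∈ PSij i j m n) :
    windowCode (q.corner3 hm hn) ∈ cornerCodes (i - 1, j - 1) := by
  obtain ⟨x, hx, hqx⟩ := hq
  obtain ⟨k, R, C, hR, hC, hxT⟩ := Set.mem_iUnion.1 hx
  refine List.mem_map.2
    ⟨blockAt (Tfun k) R C, blockAt_Tfun_mem_legalBlocks (by omega) (by omega), ?_⟩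
  congr 1
  funext a b
  rw [Pat.corner3, hqx, phiPatE_eq_substArr hxT (by simp; omega) (by simp; omega), Fin.val_castLE,
    Fin.val_castLE, substArr_two_mul_add_eq_toArr _ _ _ _ (by omega) (by omega)]

lemma PSij_disjoint {m n i j i' j' : ℕ} (hm : 3 ≤ m) (hn : 3 ≤ n)
    (hi : i ∈ ({1, 2} : Set ℕ)) (hj : j ∈ ({1, 2} : Set ℕ))
    (hi' : i' ∈ ({1, 2} : Set ℕ)) (hj' : j' ∈ ({1, 2} : Set ℕ)) (hne : (i, j) ≠ (i', j')) :
    Disjoint (PSij i j m n) (PSij i' j' m n) := by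
  simp only [Set.mem_insert_iff, Set.mem_singleton_iff] at hi hj hi' hj'
  have : Std.Symm fun c c' : ℕ × ℕ => ∀ w ∈ cornerCodes c, w ∉ cornerCodes c' :=
    ⟨fun _ _ h w hw hw' => h w hw' hw⟩
  have corner_mem {i j : ℕ} (hi : i = 1 ∨ i = 2) (hj : j = 1 ∨ j = 2) :
      (i - 1, j - 1) ∈ [(0, 0), (0, 1), (1, 0), (1, 1)] := by
    rcases hi with rfl | rfl <;> rcases hj with rfl | rfl <;> simp
  have hne' : (i - 1, j - 1) ≠ (i' - 1, j' - 1) := by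
    simp only [ne_eq, Prod.mk.injEq] at hne ⊢
    omega
  refine Set.disjoint_left.2 fun q hq hq' => cornerCodes_pairwise_disjoint.forall
    (corner_mem hi hj) (corner_mem hi' hj') hne' _
    (windowCode_corner3_mem_cornerCodes hm hn (by omega) (by omega) hq)
    (windowCode_corner3_mem_cornerCodes hm hn (by omega) (by omega) hq')

/-- Lemma 3.6: for m, n ≥ 3, P(S, m×n) is the union of the sets
P_{i,j}(S, m×n) for i,j ∈ {1,2}, which are non-empty and pairwise disjoint. -/
theorem disjoint_Pij_S (m n : ℕ) (hm : 3 ≤ m) (hn : 3 ≤ n) :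
    (PS m n = ⋃ i ∈ ({1, 2} : Set ℕ), ⋃ j ∈ ({1, 2} : Set ℕ), PSij i j m n) ∧
    (∀ i ∈ ({1, 2} : Set ℕ), ∀ j ∈ ({1, 2} : Set ℕ), (PSij i j m n).Nonempty) ∧
    (∀ i ∈ ({1, 2} : Set ℕ), ∀ j ∈ ({1, 2} : Set ℕ),
      ∀ i' ∈ ({1, 2} : Set ℕ), ∀ j' ∈ ({1, 2} : Set ℕ),
        (i, j) ≠ (i', j') → Disjoint (PSij i j m n) (PSij i' j' m n)) := by
  have le_two {i : ℕ} (hi : i ∈ ({1, 2} : Set ℕ)) : i ≤ 2 := by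
    rcases hi with rfl | rfl <;> simp
  refine ⟨(PS_subset_iUnion_PSij m n).antisymm ?_, fun i _ j _ => PSij_nonempty i j m n,
    fun i hi j hj i' hi' j' hj' => PSij_disjoint hm hn hi hj hi' hj'⟩
  simp only [Set.iUnion_subset_iff]
  exact fun i hi j hj => PSij_subset_PS (le_two hi) (le_two hj) (by omega) (by omega)
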